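/- Let q be a unit quaternion and z̄ ∈ ℝ³. If z ∈ ℝ³ satisfies (0, z) = q⁻¹ * (0, z̄) * q (quaternion conjugation), then the 4×4 matrix C(z) = [[0, z̄ᵀ - zᵀ], [z - z̄, -(z + z̄)^×]] satisfies C(z) q = 0, where q is viewed as a vector in ℝ⁴. -/
import Mathlib


open Matrix

noncomputable section

/-- Quaternions identified with `ℝ × ℝ³`. -/
abbrev Quat := ℝ × (Fin 3 → ℝ)

/-- Quaternion product. -/
def qmul (q h : Quat) : Quat :=
  (q.1 * h.1 - q.2 ⬝ᵥ h.2, q.1 • h.2 + h.1 • q.2 + crossProduct q.2 h.2)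

/-- The cross-product matrix `ω^×`. -/
def cmat (ω : Fin 3 → ℝ) : Matrix (Fin 3) (Fin 3) ℝ :=
  !![0, -ω 2, ω 1; ω 2, 0, -ω 0; -ω 1, ω 0, 0]

/-- The 4×4 matrix `ω^∧ = [[0, ωᵀ], [-ω, ω^×]]`. -/
def wedge (ω : Fin 3 → ℝ) : Matrix (Fin 1 ⊕ Fin 3) (Fin 1 ⊕ Fin 3) ℝ :=
  Matrix.fromBlocks 0 (Matrix.of fun _ j => ω j) (Matrix.of fun i _ => -ω i) (cmat ω)

/-- View a quaternion as a vector in `ℝ⁴`. -/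
def vec4 (q : Quat) : (Fin 1 ⊕ Fin 3) → ℝ :=
  Sum.elim (fun _ => q.1) q.2

/-- The matrix `Υ_q` with first row `-q_vᵀ` and lower block `q_r I₃ + q_v^×`. -/
def ups (q : Quat) : Matrix (Fin 1 ⊕ Fin 3) (Fin 3) ℝ :=
  Matrix.of (Sum.elim (fun _ j => -q.2 j)
    (fun i j => (q.1 • (1 : Matrix (Fin 3) (Fin 3) ℝ) + cmat q.2) i j))

/-- Quaternion inverse of a unit quaternion. -/
def qinv (q : Quat) : Quat := (q.1, -q.2)

/-- The implicit measurement matrix `C(z) = [[0, z̄ᵀ - zᵀ], [z - z̄, -(z + z̄)^×]]`. -/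
def Cmeas (zbar z : Fin 3 → ℝ) : Matrix (Fin 1 ⊕ Fin 3) (Fin 1 ⊕ Fin 3) ℝ :=
  Matrix.fromBlocks 0 (Matrix.of fun _ j => zbar j - z j)
    (Matrix.of fun i _ => z i - zbar i) (-(cmat (z + zbar)))

/-- if `(0, z) = q⁻¹ * (0, z̄) * q` for a unit quaternion `q`,
then `C(z) q = 0`. -/
theorem measurement_matrix_annihilates (q : Quat) (hq : q.1 ^ 2 + q.2 ⬝ᵥ q.2 = 1)
    (zbar z : Fin 3 → ℝ)
    (hz : ((0 : ℝ), z) = qmul (qmul (qinv q) ((0 : ℝ), zbar)) q) :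
    Cmeas zbar z *ᵥ vec4 q = 0 := by
  obtain ⟨a, v⟩ := q
  have h2 := congrArg Prod.snd hz
  simp only [qmul, qinv] at h2
  have h0 := congrFun h2 0
  have h1 := congrFun h2 1
  have h3 := congrFun h2 2
  simp [crossProduct, dotProduct, Fin.sum_univ_three, Matrix.vecHead, Matrix.vecTail,
    Function.comp] at h0 h1 h3
  simp [dotProduct, Fin.sum_univ_three] at hq
  funext i
  rcases i with i | i <;> fin_cases i <;>
    simp [Cmeas, vec4, cmat, Matrix.mulVec, dotProduct, Fin.sum_univ_three,
      Matrix.fromBlocks, Matrix.of_apply]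
  · linear_combination (-(v 0)) * h0 + (-(v 1)) * h1 + (-(v 2)) * h3 +
      (-(v 0 * zbar 0) - v 1 * zbar 1 - v 2 * zbar 2) * hq
  · linear_combination a * h0 + (-(v 2)) * h1 + v 1 * h3 +
      (a * zbar 0 - v 1 * zbar 2 + v 2 * zbar 1) * hq
  · linear_combination v 2 * h0 + a * h1 + (-(v 0)) * h3 +
      (a * zbar 1 - v 2 * zbar 0 + v 0 * zbar 2) * hq
  · linear_combination (-(v 1)) * h0 + v 0 * h1 + a * h3 +
      (a * zbar 2 - v 0 * zbar 1 + v 1 * zbar 0) * hq
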